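/- arXiv:2411.10641 — 3 statements merged into one kernel-verified Lean document; each statement's English description precedes it below -/
import Mathlib

section
/- Let F(z,w) = ∑_{n=0}^∞ fₙ(z)wⁿ be a Hartogs series, let U ⊆ D₁ be a nonempty connected open set, let g be holomorphic on U and not identically zero, and let E := {z ∈ U : g(z) = 0}. If F converges and is holomorphic on (U \ E) × D₂, then F converges and is holomorphic on U × D₂. -/
open Filter Topology
open scoped ENNReal

noncomputable section

/-- The open disk `{w : ℂ | |w| < R}` of radius `R ∈ (0, ∞]` centered at the origin. -/
def disk (R : ℝ≥0∞) : Set ℂ := {w : ℂ | (‖w‖₊ : ℝ≥0∞) < R}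

/-- The Hartogs series `∑ fₙ(z) wⁿ` converges at every point of `V` and
its sum function is holomorphic on `V`. -/
def HolSumOn {N : ℕ} (f : ℕ → (Fin N → ℂ) → ℂ) (V : Set ((Fin N → ℂ) × ℂ)) : Prop :=
  ∃ G : (Fin N → ℂ) × ℂ → ℂ, DifferentiableOn ℂ G V ∧
    ∀ p ∈ V, Tendsto (fun m => ∑ n ∈ Finset.range m, f n p.1 * p.2 ^ n) atTop (𝓝 (G p))

/-- The formal identity `∑_{j=0}^{t} Φⱼ · F^{t-j} = 0` in `O(D₁)[[w]]`, expressed through the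
coefficient families: every `w`-coefficient of the formal power series vanishes identically
on `D₁`. -/
def FormalAlgRel {N : ℕ} (f : ℕ → (Fin N → ℂ) → ℂ) (g : ℕ → ℕ → (Fin N → ℂ) → ℂ)
    (t : ℕ) (D₁ : Set (Fin N → ℂ)) : Prop :=
  ∀ m : ℕ, ∀ z ∈ D₁,
    (PowerSeries.coeff (R := (Fin N → ℂ) → ℂ) m
      (∑ j ∈ Finset.range (t + 1),
        PowerSeries.mk (g j) * (PowerSeries.mk f) ^ (t - j))) z = 0

/-- Condition (C1). -/
def CondC1 {N : ℕ} (f : ℕ → (Fin N → ℂ) → ℂ) (D₁ : Set (Fin N → ℂ)) (R : ℝ≥0∞) : Prop :=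
  ∃ S : Set (Fin N → ℂ), S ⊆ D₁ ∧ D₁ ⊆ closure S ∧
    ∀ α ∈ S, ∀ w ∈ disk R,
      ∃ l : ℂ, Tendsto (fun m => ∑ n ∈ Finset.range m, f n α * w ^ n) atTop (𝓝 l)

/-- Condition (C2). -/
def CondC2 {N : ℕ} (f : ℕ → (Fin N → ℂ) → ℂ) (D₁ : Set (Fin N → ℂ)) (R : ℝ≥0∞) : Prop :=
  ∃ (t : ℕ) (Φ : ℕ → (Fin N → ℂ) × ℂ → ℂ) (g : ℕ → ℕ → (Fin N → ℂ) → ℂ),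
    1 ≤ t ∧
    (∀ j, j ≤ t → DifferentiableOn ℂ (Φ j) (D₁ ×ˢ disk R)) ∧
    (∀ j n, j ≤ t → DifferentiableOn ℂ (g j n) D₁) ∧
    (∀ j, j ≤ t → ∀ p ∈ D₁ ×ˢ disk R,
      Tendsto (fun m => ∑ n ∈ Finset.range m, g j n p.1 * p.2 ^ n) atTop (𝓝 (Φ j p))) ∧
    (∃ p ∈ D₁ ×ˢ disk R, Φ 0 p ≠ 0) ∧
    FormalAlgRel f g t D₁

/-! Off the zero set `E` of `g`, the `fₙ(z)` are the Taylor coefficients of the holomorphic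
slices `w ↦ G(z, w)`, so Cauchy's estimate bounds them by `M / rⁿ` (any `r < R`) locally
uniformly. Near `z₀ ∈ E` pick a complex line through `z₀` on which `g` is not identically zero
(identity theorem): a small circle on it around `z₀` misses `E`, and so do its translates through
the points near `z₀`. The maximum principle on the translated discs carries the bound from the
circles to a neighbourhood of `z₀`. So `∑ fₙ(z) wⁿ` is locally dominated by a geometric series
on `U × D₂`, and its sum is holomorphic there. -/

open Metric Set
open scoped NNReal

theorem disk_eq_eball (R : ℝ≥0∞) : disk R = eball (0 : ℂ) R := by
  ext w; simp [disk, edist_zero_right, enorm_eq_nnnorm]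

theorem isOpen_disk (R : ℝ≥0∞) : IsOpen (disk R) :=
  disk_eq_eball R ▸ isOpen_eball

theorem closedBall_subset_disk {r : ℝ≥0} {R : ℝ≥0∞} (hrR : (r : ℝ≥0∞) < R) :
    closedBall (0 : ℂ) r ⊆ disk R := fun w hw => by
  rw [mem_closedBall_zero_iff] at hw
  exact lt_of_le_of_lt (by exact_mod_cast hw) hrR

theorem tendsto_zero_of_tendsto_sum_range {G : Type*} [AddCommGroup G] [TopologicalSpace G]
    [IsTopologicalAddGroup G] {a : ℕ → G} {l : G}
    (h : Tendsto (fun m => ∑ n ∈ Finset.range m, a n) atTop (𝓝 l)) : Tendsto a atTop (𝓝 0) := by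
  simpa [Finset.sum_range_succ] using (h.comp (tendsto_add_atTop_nat 1)).sub h

theorem hasFPowerSeriesOnBall_ofScalars_of_tendsto {a : ℕ → ℂ} {S : ℂ → ℂ} {R : ℝ≥0∞}
    (hR : 0 < R)
    (hS : ∀ w ∈ disk R, Tendsto (fun m => ∑ n ∈ Finset.range m, a n * w ^ n) atTop (𝓝 (S w))) :
    HasFPowerSeriesOnBall S (FormalMultilinearSeries.ofScalars ℂ a) 0 R := by
  set p := FormalMultilinearSeries.ofScalars ℂ a
  have hradius : R ≤ p.radius := by
    refine ENNReal.le_of_forall_nnreal_lt fun r hr => p.le_radius_of_tendsto (l := 0) ?_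
    have hr' : (r : ℂ) ∈ disk R := closedBall_subset_disk hr (by simp)
    simpa [p, FormalMultilinearSeries.ofScalars_norm] using
      (tendsto_zero_of_tendsto_sum_range (hS r hr')).norm
  refine ⟨hradius, hR, fun {y} hy => ?_⟩
  have hterm : (fun n => p n fun _ => y) = fun n => a n * y ^ n := by
    funext n
    simp [p, mul_comm]
  have hsum := p.hasSum (eball_subset_eball hradius hy)
  rw [hterm] at hsum ⊢
  rw [← disk_eq_eball] at hy
  rwa [zero_add, tendsto_nhds_unique (hS y hy) hsum.tendsto_sum_nat]

theorem HasFPowerSeriesOnBall.norm_ofScalars_coeff_le {a : ℕ → ℂ} {S : ℂ → ℂ} {R : ℝ≥0∞}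
    (hS : HasFPowerSeriesOnBall S (FormalMultilinearSeries.ofScalars ℂ a) 0 R)
    {r : ℝ≥0} (hr : 0 < r) (hrR : (r : ℝ≥0∞) < R) {M : ℝ}
    (hM : ∀ w ∈ sphere (0 : ℂ) r, ‖S w‖ ≤ M) (n : ℕ) :
    ‖a n‖ ≤ M / (r : ℝ) ^ n := by
  have hcoeff : a n = iteratedDeriv n S 0 / n.factorial := by
    have := hS.hasFPowerSeriesAt.eq_formalMultilinearSeries hS.analyticAt.hasFPowerSeriesAt
    exact congrFun (FormalMultilinearSeries.ofScalars_series_injective ℂ ℂ this) n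
  have hdiff : DiffContOnCl ℂ S (ball 0 r) := by
    refine (hS.differentiableOn.mono ?_).diffContOnCl
    rw [← disk_eq_eball]
    exact closure_ball_subset_closedBall.trans (closedBall_subset_disk hrR)
  have hcauchy := Complex.norm_iteratedDeriv_le_of_forall_mem_sphere_norm_le n
    (NNReal.coe_pos.mpr hr) hdiff hM
  rw [hcoeff, norm_div, Complex.norm_natCast, div_le_iff₀ (by positivity)]
  calc ‖iteratedDeriv n S 0‖ ≤ n.factorial * M / (r : ℝ) ^ n := hcauchy
    _ = M / (r : ℝ) ^ n * n.factorial := by ring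

section NormedSpace

variable {E F : Type*} [NormedAddCommGroup E] [NormedSpace ℂ E] [NormedAddCommGroup F]
  [NormedSpace ℂ F]

theorem norm_le_of_disc_mapsTo {f : E → F} {U : Set E} (hf : DifferentiableOn ℂ f U) {z v : E}
    (hdisc : MapsTo (fun ζ : ℂ => z + ζ • v) (closedBall 0 1) U) {C : ℝ}
    (hC : ∀ ζ ∈ sphere (0 : ℂ) 1, ‖f (z + ζ • v)‖ ≤ C) : ‖f z‖ ≤ C := by
  have hφ : DiffContOnCl ℂ (fun ζ : ℂ => f (z + ζ • v)) (ball 0 1) :=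
    ((hf.comp (by fun_prop : Differentiable ℂ fun ζ : ℂ => z + ζ • v).differentiableOn
      hdisc).mono closure_ball_subset_closedBall).diffContOnCl
  simpa using Complex.norm_le_of_forall_mem_frontier_norm_le isBounded_ball hφ
    (by rwa [frontier_ball 0 one_ne_zero]) (subset_closure (mem_ball_self one_pos))

variable [CompleteSpace F]

theorem DifferentiableOn.eqOn_zero_of_convex_of_eventuallyEq_zero {f : E → F} {U : Set E}
    (hf : DifferentiableOn ℂ f U) (hU : IsOpen U) (hUc : Convex ℝ U) {a : E} (ha : a ∈ U)
    (h₀ : f =ᶠ[𝓝 a] 0) : EqOn f 0 U := by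
  intro y hy
  set L : ℂ → E := fun ζ => a + ζ • (y - a)
  have hL : Differentiable ℂ L := by fun_prop
  have hO : IsOpen (L ⁻¹' U) := hU.preimage hL.continuous
  have hOc : Convex ℝ (L ⁻¹' U) := (hUc.translate_preimage_right a).linear_preimage
    ((LinearMap.toSpanSingleton ℂ E (y - a)).restrictScalars ℝ)
  have hL₀ : L 0 = a := by simp [L]
  have hL₁ : L 1 = y := by simp [L]
  have hfL : (f ∘ L) =ᶠ[𝓝 0] 0 := (hL.continuous.tendsto' 0 a hL₀).eventually h₀
  have hana : AnalyticOnNhd ℂ (f ∘ L) (L ⁻¹' U) :=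
    (hf.comp hL.differentiableOn (mapsTo_preimage L U)).analyticOnNhd hO
  simpa [hL₁] using hana.eqOn_zero_of_preconnected_of_eventuallyEq_zero hOc.isPreconnected
    (show L 0 ∈ U from hL₀ ▸ ha) hfL (show L 1 ∈ U from hL₁ ▸ hy)

theorem DifferentiableOn.eqOn_zero_of_isPreconnected_of_eventuallyEq_zero {f : E → F}
    {U : Set E} (hf : DifferentiableOn ℂ f U) (hU : IsOpen U) (hUc : IsPreconnected U) {a : E}
    (ha : a ∈ U) (h₀ : f =ᶠ[𝓝 a] 0) : EqOn f 0 U := by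
  have hV : IsOpen {z | f =ᶠ[𝓝 z] 0} := isOpen_setOfPred_eventually_nhds
  suffices hUV : U ⊆ {z | f =ᶠ[𝓝 z] 0} from fun z hz => (hUV hz).self_of_nhds
  refine hUc.subset_of_closure_inter_subset hV ⟨a, ha, h₀⟩ ?_
  rintro z ⟨hzV, hzU⟩
  obtain ⟨τ, hτ, hτU⟩ := isOpen_iff.mp hU z hzU
  obtain ⟨z', hz', hz'V⟩ := mem_closure_iff_nhds.mp hzV _ (ball_mem_nhds z hτ)
  exact Filter.eventually_of_mem (ball_mem_nhds z hτ) <|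
    (hf.mono hτU).eqOn_zero_of_convex_of_eventuallyEq_zero isOpen_ball (convex_ball z τ) hz' hz'V

theorem DifferentiableOn.frequently_ne_zero_of_isPreconnected {f : E → F} {U : Set E}
    (hf : DifferentiableOn ℂ f U) (hU : IsOpen U) (hUc : IsPreconnected U)
    (hne : ∃ z ∈ U, f z ≠ 0) {z₀ : E} (hz₀ : z₀ ∈ U) : ∃ᶠ z in 𝓝 z₀, f z ≠ 0 := fun h => by
  obtain ⟨z, hz, hfz⟩ := hne
  exact hfz (hf.eqOn_zero_of_isPreconnected_of_eventuallyEq_zero hU hUc hz₀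
    (h.mono fun _ => not_not.mp) hz)

theorem exists_disc_mapsTo_of_frequently_ne_zero {f : E → F} {U : Set E}
    (hf : DifferentiableOn ℂ f U) (hU : IsOpen U) {z₀ : E} (hz₀ : z₀ ∈ U)
    (hfreq : ∃ᶠ z in 𝓝 z₀, f z ≠ 0) :
    ∃ v : E, MapsTo (fun ζ : ℂ => z₀ + ζ • v) (closedBall 0 1) U ∧
      ∀ ζ ∈ sphere (0 : ℂ) 1, f (z₀ + ζ • v) ≠ 0 := by
  obtain ⟨s, hs, hsU⟩ := isOpen_iff.mp hU z₀ hz₀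
  obtain ⟨z₁, hfz₁, hz₁⟩ := (hfreq.and_eventually (ball_mem_nhds z₀ (half_pos hs))).exists
  set L : ℂ → E := fun ζ => z₀ + ζ • (z₁ - z₀)
  have hLU : MapsTo L (ball 0 2) U := fun ζ hζ => hsU <| by
    rw [mem_ball_zero_iff] at hζ
    rw [mem_ball, dist_eq_norm, add_sub_cancel_left, norm_smul, ← dist_eq_norm]
    nlinarith [norm_nonneg ζ, dist_nonneg (x := z₁) (y := z₀)]
  have hana : AnalyticOnNhd ℂ (f ∘ L) (ball 0 2) :=
    (hf.comp (by fun_prop : Differentiable ℂ L).differentiableOn hLU).analyticOnNhd isOpen_ball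
  have hne : ∀ᶠ ζ in 𝓝[≠] 0, f (L ζ) ≠ 0 := by
    refine (hana 0 (by simp)).eventually_eq_zero_or_eventually_ne_zero.resolve_left
      fun h => hfz₁ ?_
    simpa [L] using hana.eqOn_zero_of_preconnected_of_eventuallyEq_zero
      (convex_ball 0 2).isPreconnected (by simp) h (show (1 : ℂ) ∈ ball 0 2 by simp)
  obtain ⟨ε, hε, hεne⟩ := Metric.eventually_nhds_iff.mp (eventually_nhdsWithin_iff.mp hne)
  set ρ := min (ε / 2) 1
  have hρ : 0 < ρ := by positivity
  have hL (ζ : ℂ) : z₀ + ζ • (ρ : ℂ) • (z₁ - z₀) = L (ζ * ρ) := by simp [L, mul_smul]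
  refine ⟨(ρ : ℂ) • (z₁ - z₀), fun ζ hζ => ?_, fun ζ hζ => ?_⟩
  · rw [mem_closedBall_zero_iff] at hζ
    simp only [hL]
    refine hLU (mem_ball_zero_iff.mpr ?_)
    rw [norm_mul, Complex.norm_real, Real.norm_of_nonneg hρ.le]
    nlinarith [min_le_right (ε / 2) 1]
  · rw [mem_sphere_zero_iff_norm] at hζ
    have hnorm : ‖ζ * ρ‖ = ρ := by
      rw [norm_mul, hζ, one_mul, Complex.norm_real, Real.norm_of_nonneg hρ.le]
    rw [hL]
    refine hεne ?_ ?_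
    · rw [dist_zero_right, hnorm]
      exact (min_le_left _ _).trans_lt (half_lt_self hε)
    · rw [mem_compl_singleton_iff, ← norm_ne_zero_iff, hnorm]
      exact hρ.ne'

theorem differentiableOn_tsum_of_summable_norm {ι : Type*} {φ : ι → E → F} {u : ι → ℝ}
    (hu : Summable u) {U : Set E} (hU : IsOpen U) (hφ : ∀ i, DifferentiableOn ℂ (φ i) U)
    (hφu : ∀ i, ∀ x ∈ U, ‖φ i x‖ ≤ u i) :
    DifferentiableOn ℂ (fun x => ∑' i, φ i x) U := by
  intro x hx
  obtain ⟨δ, hδ, hδU⟩ := isOpen_iff.mp hU x hx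
  have hballU : ∀ y ∈ ball x (δ / 2), ball y (δ / 2) ⊆ U := fun y hy =>
    (ball_subset_ball' (by linarith [mem_ball.mp hy])).trans hδU
  have hderiv : ∀ i, ∀ y ∈ ball x (δ / 2), ‖fderiv ℂ (φ i) y‖ ≤ 2 * u i / (δ / 2) := by
    intro i y hy
    refine Complex.norm_fderiv_le_div_of_mapsTo_ball ((hφ i).mono (hballU y hy))
      (fun y' hy' => ?_) (half_pos hδ)
    rw [mem_closedBall, dist_eq_norm, two_mul]
    exact (norm_sub_le _ _).trans (add_le_add (hφu i y' (hballU y hy hy'))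
      (hφu i y (hballU y hy (mem_ball_self (half_pos hδ)))))
  have hasDeriv := hasFDerivAt_tsum_of_isPreconnected ((hu.mul_left 2).div_const (δ / 2))
    isOpen_ball (convex_ball x (δ / 2)).isPreconnected
    (fun i y hy => ((hφ i).differentiableAt (hU.mem_nhds (hballU y hy
      (mem_ball_self (half_pos hδ))))).hasFDerivAt) hderiv (mem_ball_self (half_pos hδ))
    (Summable.of_norm_bounded hu fun i => hφu i x hx) (mem_ball_self (half_pos hδ))
  exact hasDeriv.differentiableAt.differentiableWithinAt

end NormedSpace

section Hartogs

variable {E : Type*} [NormedAddCommGroup E] [NormedSpace ℂ E] {R : ℝ≥0∞}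

theorem exists_ball_norm_le_div_pow {f : ℕ → E → ℂ} {U W : Set E} (hU : IsOpen U)
    (hW : IsOpen W) (hf : ∀ n, DifferentiableOn ℂ (f n) U) {G : E × ℂ → ℂ}
    (hG : ContinuousOn G (W ×ˢ disk R))
    (hGs : ∀ p ∈ W ×ˢ disk R,
      Tendsto (fun m => ∑ n ∈ Finset.range m, f n p.1 * p.2 ^ n) atTop (𝓝 (G p)))
    {z₀ v : E} (hdisc : MapsTo (fun ζ : ℂ => z₀ + ζ • v) (closedBall 0 1) U)
    (hbdry : MapsTo (fun ζ : ℂ => z₀ + ζ • v) (sphere 0 1) W)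
    {r : ℝ≥0} (hr : 0 < r) (hrR : (r : ℝ≥0∞) < R) :
    ∃ ε > 0, ∃ M, ∀ n, ∀ z ∈ ball z₀ ε, ‖f n z‖ ≤ M / (r : ℝ) ^ n := by
  have hsphere : sphere (0 : ℂ) r ⊆ disk R := sphere_subset_closedBall.trans
    (closedBall_subset_disk hrR)
  set K := (fun q : ℂ × ℂ => (z₀ + q.1 • v, q.2)) '' (sphere 0 1 ×ˢ sphere 0 r)
  have hK : IsCompact K := ((isCompact_sphere 0 1).prod (isCompact_sphere 0 r)).image
    (by fun_prop)
  have hKW : K ⊆ W ×ˢ disk R := by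
    rintro _ ⟨⟨ζ, w⟩, ⟨hζ, hw⟩, rfl⟩
    exact ⟨hbdry hζ, hsphere hw⟩
  obtain ⟨M, hM⟩ := hK.exists_bound_of_continuousOn (hG.mono hKW)
  obtain ⟨ε₁, hε₁, hε₁U⟩ := ((isCompact_closedBall 0 1).image
    (by fun_prop)).exists_thickening_subset_open hU hdisc.image_subset
  -- one thickening keeps the translated circles inside `W` and `‖G‖ < M + 1` over them
  obtain ⟨ε₂, hε₂, hε₂K⟩ := hK.exists_thickening_subset_open
    (hG.isOpen_inter_preimage (hW.prod (isOpen_disk R))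
      (isOpen_lt continuous_norm continuous_const))
    (fun p hp => ⟨hKW hp, (hM p hp).trans_lt (lt_add_one M)⟩)
  refine ⟨min ε₁ ε₂, lt_min hε₁ hε₂, M + 1, fun n z hz => ?_⟩
  have hz₁ : dist z z₀ < ε₁ := hz.trans_le (min_le_left _ _)
  have hz₂ : dist z z₀ < ε₂ := hz.trans_le (min_le_right _ _)
  have hbound : ∀ ζ ∈ sphere (0 : ℂ) 1, ‖f n (z + ζ • v)‖ ≤ (M + 1) / (r : ℝ) ^ n := by
    intro ζ hζ
    have hnear (w : ℂ) (hw : w ∈ sphere (0 : ℂ) r) :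
        (z + ζ • v, w) ∈ W ×ˢ disk R ∧ ‖G (z + ζ • v, w)‖ < M + 1 := by
      refine hε₂K (mem_thickening_iff.mpr
        ⟨(z₀ + ζ • v, w), mem_image_of_mem _ (mk_mem_prod hζ hw), ?_⟩)
      rw [Prod.dist_eq, dist_add_right, dist_self]
      exact max_lt hz₂ hε₂
    have hzW : z + ζ • v ∈ W := (hnear r (by simp)).1.1
    have hps := hasFPowerSeriesOnBall_ofScalars_of_tendsto (a := fun n => f n (z + ζ • v))
      (S := fun w => G (z + ζ • v, w)) ((ENNReal.coe_pos.mpr hr).trans hrR)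
      fun w hw => hGs (_, w) ⟨hzW, hw⟩
    exact hps.norm_ofScalars_coeff_le hr hrR (fun w hw => (hnear w hw).2.le) n
  refine norm_le_of_disc_mapsTo (hf n) (fun ζ hζ => hε₁U (mem_thickening_iff.mpr
    ⟨z₀ + ζ • v, mem_image_of_mem _ hζ, ?_⟩)) hbound
  rwa [dist_add_right]

theorem summable_and_differentiableAt_tsum_mul_pow {f : ℕ → E → ℂ} {U : Set E} (hU : IsOpen U)
    (hf : ∀ n, DifferentiableOn ℂ (f n) U)
    (hbound : ∀ z₀ ∈ U, ∀ r : ℝ≥0, 0 < r → (r : ℝ≥0∞) < R →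
      ∃ ε > 0, ∃ M, ∀ n, ∀ z ∈ ball z₀ ε, ‖f n z‖ ≤ M / (r : ℝ) ^ n)
    {p : E × ℂ} (hp : p ∈ U ×ˢ disk R) :
    Summable (fun n => f n p.1 * p.2 ^ n) ∧
      DifferentiableAt ℂ (fun q : E × ℂ => ∑' n, f n q.1 * q.2 ^ n) p := by
  obtain ⟨hz₀, hw₀⟩ := hp
  obtain ⟨r, hw₀r, hrR⟩ := ENNReal.lt_iff_exists_nnreal_btwn.mp hw₀
  obtain ⟨r₁, hw₀r₁, hr₁r⟩ := exists_between (ENNReal.coe_lt_coe.mp hw₀r)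
  have hr : 0 < r := hw₀r₁.bot_lt.trans hr₁r
  obtain ⟨ε, hε, M, hM⟩ := hbound p.1 hz₀ r hr hrR
  set s := (ball p.1 ε ∩ U) ×ˢ ball (0 : ℂ) r₁
  have hs : IsOpen s := (isOpen_ball.inter hU).prod isOpen_ball
  have hps : p ∈ s := ⟨⟨mem_ball_self hε, hz₀⟩, mem_ball_zero_iff.mpr (by exact_mod_cast hw₀r₁)⟩
  have hterm : ∀ n, ∀ q ∈ s, ‖f n q.1 * q.2 ^ n‖ ≤ M * ((r₁ : ℝ) / r) ^ n := by
    rintro n ⟨z, w⟩ ⟨⟨hz, -⟩, hw⟩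
    rw [norm_mul, norm_pow]
    calc ‖f n z‖ * ‖w‖ ^ n ≤ M / (r : ℝ) ^ n * (r₁ : ℝ) ^ n :=
          mul_le_mul (hM n z hz)
            (pow_le_pow_left₀ (norm_nonneg _) (mem_ball_zero_iff.mp hw).le n) (by positivity)
            ((norm_nonneg _).trans (hM n z hz))
      _ = M * ((r₁ : ℝ) / r) ^ n := by rw [div_pow]; ring
  have hsum : Summable fun n => M * ((r₁ : ℝ) / r) ^ n :=
    (summable_geometric_of_lt_one (by positivity)
      ((div_lt_one (NNReal.coe_pos.mpr hr)).mpr (by exact_mod_cast hr₁r))).mul_left M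
  have hdiff : ∀ n, DifferentiableOn ℂ (fun q : E × ℂ => f n q.1 * q.2 ^ n) s := fun n =>
    ((hf n).comp differentiableOn_fst fun q hq => hq.1.2).mul (differentiableOn_snd.pow n)
  exact ⟨Summable.of_norm_bounded hsum fun n => hterm n p hps,
    (differentiableOn_tsum_of_summable_norm hsum hs hdiff hterm).differentiableAt
      (hs.mem_nhds hps)⟩

end Hartogs

theorem hartogs_series_extends_over_zero_set_general
    (N : ℕ) (D₁ : Set (Fin N → ℂ)) (R : ℝ≥0∞)
    (f : ℕ → (Fin N → ℂ) → ℂ) (hf : ∀ n, DifferentiableOn ℂ (f n) D₁)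
    (U : Set (Fin N → ℂ)) (hU : U ⊆ D₁) (hUopen : IsOpen U) (hUconn : IsConnected U)
    (g : (Fin N → ℂ) → ℂ) (hg : DifferentiableOn ℂ g U) (hgne : ∃ z ∈ U, g z ≠ 0)
    (hF : HolSumOn f ((U \ {z ∈ U | g z = 0}) ×ˢ disk R)) :
    HolSumOn f (U ×ˢ disk R) := by
  obtain ⟨G, hGd, hGs⟩ := hF
  have hfU (n : ℕ) : DifferentiableOn ℂ (f n) U := (hf n).mono hU
  have hWopen : IsOpen (U \ {z ∈ U | g z = 0}) := by
    have hW : U \ {z ∈ U | g z = 0} = U ∩ g ⁻¹' {0}ᶜ := by ext; simp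
    exact hW ▸ hg.continuousOn.isOpen_inter_preimage hUopen isOpen_compl_singleton
  have hbound : ∀ z₀ ∈ U, ∀ r : ℝ≥0, 0 < r → (r : ℝ≥0∞) < R →
      ∃ ε > 0, ∃ M, ∀ n, ∀ z ∈ ball z₀ ε, ‖f n z‖ ≤ M / (r : ℝ) ^ n := by
    intro z₀ hz₀ r hr hrR
    obtain ⟨v, hdisc, hbdry⟩ := exists_disc_mapsTo_of_frequently_ne_zero hg hUopen hz₀
      (hg.frequently_ne_zero_of_isPreconnected hUopen hUconn.isPreconnected hgne hz₀)
    exact exists_ball_norm_le_div_pow hUopen hWopen hfU hGd.continuousOn hGs hdisc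
      (fun ζ hζ => ⟨hdisc (sphere_subset_closedBall hζ), fun h => hbdry ζ hζ h.2⟩) hr hrR
  have hlocal := fun p (hp : p ∈ U ×ˢ disk R) =>
    summable_and_differentiableAt_tsum_mul_pow hUopen hfU hbound hp
  exact ⟨_, fun p hp => (hlocal p hp).2.differentiableWithinAt,
    fun p hp => (hlocal p hp).1.hasSum.tendsto_sum_nat⟩

/-- **Removing a thin set.** If a Hartogs series converges and is holomorphic on
`(U \ E) × D₂`, where `E` is the zero set in `U` of a holomorphic function `g` on `U` that is
not identically zero, then it converges and is holomorphic on all of `U × D₂`. -/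
theorem hartogs_series_extends_over_zero_set
    (N : ℕ) (hN : 1 ≤ N)
    (D₁ : Set (Fin N → ℂ)) (hD₁open : IsOpen D₁) (hD₁conn : IsConnected D₁)
    (R : ℝ≥0∞) (hR : 0 < R)
    (f : ℕ → (Fin N → ℂ) → ℂ) (hf : ∀ n, DifferentiableOn ℂ (f n) D₁)
    (U : Set (Fin N → ℂ)) (hU : U ⊆ D₁) (hUopen : IsOpen U) (hUconn : IsConnected U)
    (g : (Fin N → ℂ) → ℂ) (hg : DifferentiableOn ℂ g U) (hgne : ∃ z ∈ U, g z ≠ 0)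
    (hF : HolSumOn f ((U \ {z ∈ U | g z = 0}) ×ˢ disk R)) :
    HolSumOn f (U ×ˢ disk R) :=
  hartogs_series_extends_over_zero_set_general N D₁ R f hf U hU hUopen hUconn g hg hgne hF

end
end

section
/- If x ∈ ℝ is irrational, then there exist infinitely many positive integers n such that |d(n! · x)| ≥ 1/(2(n+1)), where d(y) denotes the signed minimal distance from y to ℤ. -/
open Filter Topology

noncomputable section

/-- The nearest integer to `x`, with the convention that half-integers round down:
`e(x) = ⌊x⌋` when `x - ⌊x⌋ ≤ 1/2`, and `e(x) = ⌊x⌋ + 1` otherwise. -/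
def nearestInt (x : ℝ) : ℤ := if x - ⌊x⌋ ≤ 1 / 2 then ⌊x⌋ else ⌊x⌋ + 1

/-- The signed minimal distance `d(x) = x - e(x)` from `x` to `ℤ`. -/
def signedDistToInt (x : ℝ) : ℝ := x - nearestInt x

/-!
If `|d(n! x)| < 1/(2(n+1))`, then `(n+1) d(n! x)` lies strictly within `1/2` of `0` and differs
from `(n+1)! x` by an integer, so it is `d((n+1)! x)`. Hence if this held for all large `n`,
`|d(n! x)|` would at least double at each step from some point on; it starts positive because
`n! x` is irrational, contradicting `|d| ≤ 1/2`.
-/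

theorem abs_signedDistToInt_le_half (y : ℝ) : |signedDistToInt y| ≤ 1 / 2 := by
  have h₀ : (⌊y⌋ : ℝ) ≤ y := Int.floor_le y
  have h₁ : y < ⌊y⌋ + 1 := Int.lt_floor_add_one y
  unfold signedDistToInt nearestInt
  split_ifs <;> rw [abs_le] <;> push_cast <;> constructor <;> linarith

theorem signedDistToInt_eq_sub_of_abs_sub_lt {y : ℝ} {m : ℤ} (h : |y - m| < 1 / 2) :
    signedDistToInt y = y - m := by
  rw [abs_lt] at h
  suffices nearestInt y = m by rw [signedDistToInt, this]
  unfold nearestInt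
  rcases le_or_gt (m : ℝ) y with hy | hy
  · have hfloor : ⌊y⌋ = m := by
      rw [Int.floor_eq_iff]; constructor <;> linarith
    rw [hfloor, if_pos (by linarith)]
  · have hfloor : ⌊y⌋ = m - 1 := by
      rw [Int.floor_eq_iff]; constructor <;> push_cast <;> linarith
    rw [hfloor, if_neg (by push_cast; linarith)]
    ring

theorem signedDistToInt_natCast_mul {y : ℝ} {k : ℕ} (h : |k * signedDistToInt y| < 1 / 2) :
    signedDistToInt (k * y) = k * signedDistToInt y := by
  have hsub : (k : ℝ) * y - ((k * nearestInt y : ℤ) : ℝ) = k * signedDistToInt y := by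
    rw [signedDistToInt]; push_cast; ring
  rw [signedDistToInt_eq_sub_of_abs_sub_lt (hsub ▸ h), hsub]

theorem Irrational.signedDistToInt_ne_zero {y : ℝ} (hy : Irrational y) :
    signedDistToInt y ≠ 0 := fun h =>
  hy.ne_int (nearestInt y) (sub_eq_zero.mp h)

theorem two_mul_abs_signedDistToInt_factorial_le {x : ℝ} {n : ℕ} (hn : 0 < n)
    (hsmall : |signedDistToInt (n.factorial * x)| < 1 / (2 * ((n : ℝ) + 1))) :
    2 * |signedDistToInt (n.factorial * x)| ≤ |signedDistToInt ((n + 1).factorial * x)| := by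
  set δ := |signedDistToInt (n.factorial * x)|
  have hpos : (0 : ℝ) < n + 1 := by positivity
  have hscaled : |((n + 1 : ℕ) : ℝ) * signedDistToInt (n.factorial * x)| < 1 / 2 := by
    rw [abs_mul, Nat.abs_cast]
    calc ((n + 1 : ℕ) : ℝ) * δ < (n + 1) * (1 / (2 * (n + 1))) := by
          push_cast; gcongr
      _ = 1 / 2 := by field_simp
  have hstep : signedDistToInt ((n + 1).factorial * x) =
      ((n + 1 : ℕ) : ℝ) * signedDistToInt (n.factorial * x) := by
    rw [← signedDistToInt_natCast_mul hscaled, Nat.factorial_succ, Nat.cast_mul, mul_assoc]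
  have htwo : (2 : ℝ) ≤ (n + 1 : ℕ) := by exact_mod_cast Nat.succ_le_succ hn
  rw [hstep, abs_mul, Nat.abs_cast]
  exact mul_le_mul_of_nonneg_right htwo (abs_nonneg _)

theorem two_pow_mul_le_of_two_mul_le {u : ℕ → ℝ} {N : ℕ} (h : ∀ n ≥ N, 2 * u n ≤ u (n + 1))
    (k : ℕ) : 2 ^ k * u N ≤ u (N + k) := by
  induction k with
  | zero => simp
  | succ k ih =>
    calc 2 ^ (k + 1) * u N = 2 * (2 ^ k * u N) := by ring
      _ ≤ 2 * u (N + k) := by linarith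
      _ ≤ u (N + k + 1) := h (N + k) (Nat.le_add_right N k)

theorem not_bddAbove_range_of_two_mul_le {u : ℕ → ℝ} {N : ℕ} (hpos : 0 < u N)
    (h : ∀ n ≥ N, 2 * u n ≤ u (n + 1)) : ¬BddAbove (Set.range u) := by
  rintro ⟨B, hB⟩
  obtain ⟨k, hk⟩ := pow_unbounded_of_one_lt (B / u N) (by norm_num : (1 : ℝ) < 2)
  have hgt : B < 2 ^ k * u N := (div_lt_iff₀ hpos).mp hk
  exact (hgt.trans_le (two_pow_mul_le_of_two_mul_le h k)).not_ge (hB ⟨N + k, rfl⟩)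

/-- If `x` is irrational, then `|d(n! · x)| ≥ 1/(2(n+1))` for infinitely many positive
integers `n`. -/
theorem infinite_good_factorial_distances (x : ℝ) (hx : Irrational x) :
    {n : ℕ | 0 < n ∧ 1 / (2 * ((n : ℝ) + 1)) ≤ |signedDistToInt ((n.factorial : ℝ) * x)|}.Infinite := by
  refine Set.infinite_of_forall_exists_gt fun N => ?_
  by_contra! hbounded
  have hsmall : ∀ n > N, |signedDistToInt (n.factorial * x)| < 1 / (2 * ((n : ℝ) + 1)) :=
    fun n hn => not_le.mp fun hle => (hbounded n ⟨by omega, hle⟩).not_gt hn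
  set u : ℕ → ℝ := fun n => |signedDistToInt (n.factorial * x)|
  have hpos : 0 < u (N + 1) :=
    abs_pos.mpr (hx.natCast_mul (Nat.factorial_ne_zero _)).signedDistToInt_ne_zero
  have hdouble : ∀ n ≥ N + 1, 2 * u n ≤ u (n + 1) := fun n hn =>
    two_mul_abs_signedDistToInt_factorial_le (by omega) (hsmall n hn)
  exact not_bddAbove_range_of_two_mul_le hpos hdouble
    ⟨1 / 2, by rintro _ ⟨n, rfl⟩; exact abs_signedDistToInt_le_half _⟩

end
end

section
/- Fix τ₀ in the upper half plane ℍ. For every positive integer n and every z ∈ ℂ, |θ₁₁(n! · z; τ₀)| ≥ |θ₁₁(d(n! · z); τ₀)|. -/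
/-!
Quasi-periodicity: shifting the argument of `θ₁₁(·; τ₀)` by the lattice vector `aτ₀ + b` multiplies
its modulus by `exp(-π Im τ₀ (x² - (x - a)²))` when the argument has `τ₀`-coordinate `x - a`. For
`a = e(x)` this factor is at most `1`, since `e(x)` is at least as close to `x` as `0` is.
-/

open Filter Topology

noncomputable section

/-- The elliptic theta function
`θ₁₁(z;τ) = ∑_{m ∈ ℤ} exp(π√-1((m+1/2)²τ + 2(m+1/2)(z+1/2)))`. -/
def theta (z τ : ℂ) : ℂ :=
  ∑' m : ℤ, Complex.exp ((Real.pi : ℂ) * Complex.I *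
    (((m : ℂ) + 1 / 2) ^ 2 * τ + 2 * ((m : ℂ) + 1 / 2) * (z + 1 / 2)))

-- Mathlib's `round` breaks ties upwards, `nearestInt` downwards.
lemma nearestInt_eq_neg_round_neg (x : ℝ) : nearestInt x = -round (-x) := by
  suffices round (-x) = -nearestInt x by omega
  rw [round_eq_iff]
  have := Int.floor_le x
  have := Int.lt_floor_add_one x
  unfold nearestInt
  split_ifs <;> push_cast <;> constructor <;> linarith

lemma abs_sub_nearestInt_le (x : ℝ) (k : ℤ) : |x - nearestInt x| ≤ |x - k| := by
  calc |x - nearestInt x| = |-x - round (-x)| := by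
        rw [nearestInt_eq_neg_round_neg, ← abs_neg]; push_cast; ring_nf
    _ ≤ |-x - ((-k : ℤ) : ℝ)| := round_le _ _
    _ = |x - k| := by rw [← abs_neg]; push_cast; ring_nf

lemma sq_sub_nearestInt_le_sq (x : ℝ) : (x - nearestInt x) ^ 2 ≤ x ^ 2 := by
  simpa using sq_le_sq.mpr (abs_sub_nearestInt_le x 0)

lemma theta_eq_exp_mul_theta_add (z τ : ℂ) (a b : ℤ) :
    theta z τ = Complex.exp ((Real.pi : ℂ) * Complex.I *
      ((a : ℂ) ^ 2 * τ + 2 * (a : ℂ) * (z + 1 / 2) - (b : ℂ))) *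
      theta (z + (a : ℂ) * τ + (b : ℂ)) τ := by
  unfold theta
  rw [← tsum_mul_left, ← (Equiv.addRight a).tsum_eq]
  refine tsum_congr fun m => ?_
  rw [Equiv.coe_addRight, ← Complex.exp_add]
  -- reindexing `m ↦ m + a` leaves the cross term `2πi m b`, an integer multiple of `2πi`
  have h : (Real.pi : ℂ) * Complex.I *
      ((((m + a : ℤ) : ℂ) + 1 / 2) ^ 2 * τ + 2 * (((m + a : ℤ) : ℂ) + 1 / 2) * (z + 1 / 2)) =
      ((Real.pi : ℂ) * Complex.I *
        ((a : ℂ) ^ 2 * τ + 2 * (a : ℂ) * (z + 1 / 2) - (b : ℂ)) +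
       (Real.pi : ℂ) * Complex.I *
        (((m : ℂ) + 1 / 2) ^ 2 * τ +
          2 * ((m : ℂ) + 1 / 2) * ((z + (a : ℂ) * τ + (b : ℂ)) + 1 / 2))) +
      ((-(m * b) : ℤ) : ℂ) * (2 * (Real.pi : ℂ) * Complex.I) := by
    push_cast; ring
  rw [h, Complex.exp_add, Complex.exp_int_mul_two_pi_mul_I, mul_one]

lemma norm_theta_eq_exp_mul_norm_theta_add (z τ : ℂ) (a b : ℤ) :
    ‖theta z τ‖ = Real.exp (-Real.pi * ((a : ℝ) ^ 2 * τ.im + 2 * a * z.im)) *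
      ‖theta (z + (a : ℂ) * τ + (b : ℂ)) τ‖ := by
  rw [theta_eq_exp_mul_theta_add z τ a b, norm_mul, Complex.norm_exp]
  congr 2
  simp [Complex.mul_re, Complex.mul_im, pow_two]

theorem theta_abs_ge_theta_abs_of_nearest_general (τ₀ : ℂ) (hτ₀ : 0 < τ₀.im)
    (n : ℕ) (z : ℂ) (x y : ℝ)
    (hxy : (n.factorial : ℂ) * z = (x : ℂ) * τ₀ + (y : ℂ)) :
    ‖theta ((n.factorial : ℂ) * z -
        ((nearestInt x : ℂ) * τ₀ + (nearestInt y : ℂ))) τ₀‖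
      ≤ ‖theta ((n.factorial : ℂ) * z) τ₀‖ := by
  set w : ℂ := (n.factorial : ℂ) * z
  set a : ℤ := nearestInt x
  set b : ℤ := nearestInt y
  have hd_im : (w - (a * τ₀ + b)).im = (x - a) * τ₀.im := by
    rw [hxy]
    simp only [Complex.sub_im, Complex.add_im, Complex.mul_im, Complex.ofReal_re,
      Complex.ofReal_im, Complex.intCast_re, Complex.intCast_im, zero_mul, add_zero]
    ring
  rw [norm_theta_eq_exp_mul_norm_theta_add _ τ₀ a b, hd_im,
    show w - (a * τ₀ + b) + a * τ₀ + b = w by ring]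
  refine mul_le_of_le_one_left (norm_nonneg _) (Real.exp_le_one_iff.mpr ?_)
  nlinarith [Real.pi_pos, mul_le_mul_of_nonneg_left (sq_sub_nearestInt_le_sq x) hτ₀.le]

/-- For `τ₀ ∈ ℍ`, `n ≥ 1` and `z ∈ ℂ`, one has `|θ₁₁(n!z; τ₀)| ≥ |θ₁₁(d(n!z); τ₀)|`, where
`d(n!z) = n!z − e(x)τ₀ − e(y)` is computed from the real coordinates `n!z = xτ₀ + y`. -/
theorem theta_abs_ge_theta_abs_of_nearest (τ₀ : ℂ) (hτ₀ : 0 < τ₀.im)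
    (n : ℕ) (hn : 1 ≤ n) (z : ℂ) (x y : ℝ)
    (hxy : (n.factorial : ℂ) * z = (x : ℂ) * τ₀ + (y : ℂ)) :
    ‖theta ((n.factorial : ℂ) * z -
        ((nearestInt x : ℂ) * τ₀ + (nearestInt y : ℂ))) τ₀‖
      ≤ ‖theta ((n.factorial : ℂ) * z) τ₀‖ :=
  theta_abs_ge_theta_abs_of_nearest_general τ₀ hτ₀ n z x y hxy

end
end
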